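/- Let G be a finite simple isolate-free graph with maximum degree Δ(G), and let Ψ be a total coalition partition of G. Then every class C of Ψ forms a total coalition with at most Δ(G) other classes of Ψ; equivalently, the maximum degree of the total coalition graph TCG(G,Ψ) is at most Δ(G). -/

import Mathlib

open scoped Classical

variable {V : Type*}

/-- `S` is a total dominating set of `G`: every vertex of `G` has a neighbor in `S`. -/
def TotalDomSet (G : SimpleGraph V) (S : Finset V) : Prop :=
  ∀ v : V, ∃ u ∈ S, G.Adj v u

/-- Two disjoint sets `A`, `B` form a total coalition in `G` if neither is a total
dominating set but their union is. -/
def TotalCoalition [DecidableEq V] (G : SimpleGraph V) (A B : Finset V) : Prop :=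
  Disjoint A B ∧ ¬ TotalDomSet G A ∧ ¬ TotalDomSet G B ∧ TotalDomSet G (A ∪ B)

/-- A graph is isolate-free if every vertex has a neighbor. -/
def IsolateFree (G : SimpleGraph V) : Prop :=
  ∀ v : V, ∃ u : V, G.Adj v u

/-- `Ψ` is a total coalition partition of `G`: a partition of the vertex set into
nonempty classes, none of which is a total dominating set, such that every class
forms a total coalition with at least one other class. -/
def IsTCPartition [DecidableEq V] (G : SimpleGraph V) (Ψ : Finset (Finset V)) : Prop :=
  (∀ C ∈ Ψ, C.Nonempty) ∧
  (∀ v : V, ∃! C, C ∈ Ψ ∧ v ∈ C) ∧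
  (∀ C ∈ Ψ, ¬ TotalDomSet G C) ∧
  (∀ C ∈ Ψ, ∃ D ∈ Ψ, D ≠ C ∧ TotalCoalition G C D)

/-- The total coalition graph `TCG(G,Ψ)`: vertices are the classes of `Ψ`, and two
classes are adjacent iff they form a total coalition. -/
def TCG [DecidableEq V] (G : SimpleGraph V) (Ψ : Finset (Finset V)) :
    SimpleGraph {C // C ∈ Ψ} where
  Adj C D := C ≠ D ∧ TotalCoalition G (C : Finset V) (D : Finset V)
  symm := by
    constructor
    rintro C D ⟨hne, hd, hA, hB, hU⟩
    exact ⟨hne.symm, hd.symm, hB, hA, by rwa [Finset.union_comm]⟩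
  loopless := ⟨by rintro C ⟨hne, _⟩; exact hne rfl⟩

lemma TotalCoalition.exists_adj_mem_right [DecidableEq V] {G : SimpleGraph V}
    {A B : Finset V} (h : TotalCoalition G A B) {v : V} (hv : ∀ u ∈ A, ¬ G.Adj v u) :
    ∃ u ∈ B, G.Adj v u := by
  obtain ⟨u, hu, hadj⟩ := h.2.2.2 v
  rcases Finset.mem_union.mp hu with huA | huB
  · exact absurd hadj (hv u huA)
  · exact ⟨u, huB, hadj⟩

lemma IsTCPartition.pairwiseDisjoint [DecidableEq V] {G : SimpleGraph V} {Ψ : Finset (Finset V)}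
    (hΨ : IsTCPartition G Ψ) : (Ψ : Set (Finset V)).PairwiseDisjoint id := by
  intro C hC D hD hCD
  refine Finset.disjoint_left.mpr fun u huC huD => hCD ?_
  exact (hΨ.2.1 u).unique ⟨hC, huC⟩ ⟨hD, huD⟩

lemma card_filter_exists_adj_le_degree [Fintype V] {G : SimpleGraph V} [DecidableRel G.Adj]
    {Ψ : Finset (Finset V)} (hΨ : (Ψ : Set (Finset V)).PairwiseDisjoint id) (v : V) :
    (Ψ.filter fun D => ∃ u ∈ D, G.Adj v u).card ≤ G.degree v := by
  rw [← G.card_neighborFinset_eq_degree]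
  refine Finset.card_le_card_of_forall_subsingleton (fun D u => u ∈ D) ?_ ?_
  · intro D hD
    obtain ⟨u, huD, hadj⟩ := (Finset.mem_filter.mp hD).2
    exact ⟨u, (G.mem_neighborFinset v u).mpr hadj, huD⟩
  · rintro u - C ⟨hC, huC⟩ D ⟨hD, huD⟩
    exact hΨ.elim (Finset.mem_filter.mp hC).1 (Finset.mem_filter.mp hD).1
      (Finset.not_disjoint_iff.mpr ⟨u, huC, huD⟩)

/-- A vertex `v` with no neighbor in `C` must have a neighbor in every coalition partner of
`C`, and pairwise disjoint partners need pairwise distinct neighbors of `v`. -/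
lemma card_totalCoalition_partners_le_maxDegree [Fintype V] [DecidableEq V]
    {G : SimpleGraph V} [DecidableRel G.Adj]
    {Ψ : Finset (Finset V)} (hΨ : (Ψ : Set (Finset V)).PairwiseDisjoint id) {C : Finset V}
    (hC : ¬ TotalDomSet G C) :
    (Ψ.filter fun D => D ≠ C ∧ TotalCoalition G C D).card ≤ G.maxDegree := by
  obtain ⟨v, hv⟩ : ∃ v, ∀ u ∈ C, ¬ G.Adj v u := by simpa [TotalDomSet] using hC
  calc (Ψ.filter fun D => D ≠ C ∧ TotalCoalition G C D).card
      ≤ (Ψ.filter fun D => ∃ u ∈ D, G.Adj v u).card :=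
        Finset.card_le_card <|
          Finset.monotone_filter_right Ψ fun _ _ hD => hD.2.exists_adj_mem_right hv
    _ ≤ G.degree v := card_filter_exists_adj_le_degree hΨ v
    _ ≤ G.maxDegree := G.degree_le_maxDegree v

lemma TCG_degree_eq [DecidableEq V] (G : SimpleGraph V) (Ψ : Finset (Finset V))
    (C : {C // C ∈ Ψ}) :
    (TCG G Ψ).degree C = (Ψ.filter fun D => D ≠ C.1 ∧ TotalCoalition G C.1 D).card := by
  rw [← SimpleGraph.card_neighborFinset_eq_degree]
  refine Finset.card_nbij Subtype.val ?_ Subtype.val_injective.injOn ?_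
  · intro D hD
    obtain ⟨hCD, hcoal⟩ := (TCG G Ψ).mem_neighborFinset C D |>.mp hD
    exact Finset.mem_filter.mpr ⟨D.2, fun h => hCD (Subtype.ext h.symm), hcoal⟩
  · intro D hD
    obtain ⟨hDΨ, hDC, hcoal⟩ := Finset.mem_filter.mp hD
    have hCD : C ≠ ⟨D, hDΨ⟩ := fun h => hDC (congrArg Subtype.val h).symm
    exact ⟨⟨D, hDΨ⟩, (TCG G Ψ).mem_neighborFinset _ _ |>.mpr ⟨hCD, hcoal⟩, rfl⟩

theorem statement_0_general [Fintype V] [DecidableEq V]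
    (G : SimpleGraph V) [DecidableRel G.Adj]
    (Ψ : Finset (Finset V)) (hΨ : IsTCPartition G Ψ) :
    (∀ C ∈ Ψ, (Ψ.filter fun D => D ≠ C ∧ TotalCoalition G C D).card ≤ G.maxDegree) ∧
    (TCG G Ψ).maxDegree ≤ G.maxDegree := by
  have partners_le : ∀ C ∈ Ψ,
      (Ψ.filter fun D => D ≠ C ∧ TotalCoalition G C D).card ≤ G.maxDegree := fun C hC =>
    card_totalCoalition_partners_le_maxDegree hΨ.pairwiseDisjoint (hΨ.2.2.1 C hC)
  refine ⟨partners_le, SimpleGraph.maxDegree_le_of_forall_degree_le _ _ fun C => ?_⟩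
  rw [TCG_degree_eq]
  exact partners_le C C.2

/-- Every class of a total coalition partition forms a total coalition with at most
`Δ(G)` other classes; equivalently, `Δ(TCG(G,Ψ)) ≤ Δ(G)`. -/
theorem statement_0 [Fintype V] [DecidableEq V]
    (G : SimpleGraph V) [DecidableRel G.Adj] (hG : IsolateFree G)
    (Ψ : Finset (Finset V)) (hΨ : IsTCPartition G Ψ) :
    (∀ C ∈ Ψ, (Ψ.filter fun D => D ≠ C ∧ TotalCoalition G C D).card ≤ G.maxDegree) ∧
    (TCG G Ψ).maxDegree ≤ G.maxDegree :=
  statement_0_general G Ψ hΨ
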